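/- arXiv:1803.10720 — 3 statements merged into one kernel-verified Lean document; each statement's English description precedes it below -/
import Mathlib

section
/- Let f₀, f₁, f₂ be natural numbers with f₂ ≥ 1 satisfying the Euler relation f₀ + f₂ = f₁ + 2. Then every complex root of the cubic polynomial p(X) = f₂·X³ + f₁·X² + f₀·X + 2 (viewed in ℝ[X], with roots taken in ℂ) is real if and only if (f₀ + 2)² ≥ 8·(f₁ + 2). -/
/-!
Euler's relation makes `-1` a root of the Euler polynomial: it factors as
`(X + 1) * (f₂ X² + (f₁ - f₂) X + 2)`, and after substituting `f₀ = f₁ + 2 - f₂` the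
discriminant of the quadratic factor is exactly `(f₀ + 2)² - 8 (f₁ + 2)`. A real quadratic
has only real roots iff its discriminant is nonnegative, since at a root `z` the number
`2az + b` squares to the discriminant.
-/

open Polynomial

def AllRootsReal (p : ℝ[X]) : Prop :=
  ∀ z : ℂ, (p.map (algebraMap ℝ ℂ)).IsRoot z → z.im = 0

theorem allRootsReal_mul {p q : ℝ[X]} :
    AllRootsReal (p * q) ↔ AllRootsReal p ∧ AllRootsReal q := by
  simp only [AllRootsReal, Polynomial.map_mul, IsRoot.def, eval_mul, mul_eq_zero]
  exact ⟨fun h => ⟨fun z hz => h z (.inl hz), fun z hz => h z (.inr hz)⟩,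
    fun h z hz => hz.elim (h.1 z) (h.2 z)⟩

theorem allRootsReal_X_add_C (r : ℝ) : AllRootsReal (X + C r) := by
  intro z hz
  simp only [Polynomial.map_add, map_X, map_C, IsRoot.def, eval_add, eval_X, eval_C] at hz
  rw [eq_neg_of_add_eq_zero_left hz]
  simp

theorem Complex.im_eq_zero_of_sq_eq_ofReal {w : ℂ} {d : ℝ} (hd : 0 ≤ d) (hw : w ^ 2 = d) :
    w.im = 0 := by
  rw [← Real.sq_sqrt hd, Complex.ofReal_pow, sq_eq_sq_iff_eq_or_eq_neg] at hw
  rcases hw with rfl | rfl <;> simp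

theorem allRootsReal_quadratic_iff {a b c : ℝ} (ha : a ≠ 0) :
    AllRootsReal (C a * X ^ 2 + C b * X + C c) ↔ 0 ≤ discrim a b c := by
  have hroot (z : ℂ) : ((C a * X ^ 2 + C b * X + C c).map (algebraMap ℝ ℂ)).IsRoot z ↔
      (a : ℂ) * (z * z) + b * z + c = 0 := by
    simp [sq]
  have hdiscrim : discrim (a : ℂ) b c = (discrim a b c : ℝ) := by
    simp [discrim]
  constructor
  · intro hreal
    by_contra! hneg
    have ha' : (a : ℂ) ≠ 0 := by exact_mod_cast ha
    obtain ⟨z, hz⟩ := exists_quadratic_eq_zero ha' (IsAlgClosed.exists_eq_mul_self _)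
    have hz_re : z = z.re := Complex.ext rfl (by simpa using hreal z ((hroot z).2 hz))
    have hsq := discrim_eq_sq_of_quadratic_eq_zero hz
    rw [hdiscrim, hz_re] at hsq
    have hsq_re : discrim a b c = (2 * a * z.re + b) ^ 2 := by exact_mod_cast hsq
    nlinarith [sq_nonneg (2 * a * z.re + b)]
  · intro hnonneg z hz
    have hsq := discrim_eq_sq_of_quadratic_eq_zero ((hroot z).1 hz)
    rw [hdiscrim] at hsq
    simpa [ha] using Complex.im_eq_zero_of_sq_eq_ofReal hnonneg hsq.symm

section Euler

variable {R : Type*} [CommRing R] {a b d : R}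

theorem euler_cubic_eq_mul (h : d + a = b + 2) :
    C a * X ^ 3 + C b * X ^ 2 + C d * X + C 2 =
      (X + C 1) * (C a * X ^ 2 + C (b - a) * X + C 2) := by
  rw [eq_sub_of_add_eq h, C_sub, C_sub, C_add, C_1]
  ring

theorem euler_discrim_eq (h : d + a = b + 2) :
    (d + 2) ^ 2 - 8 * (b + 2) = discrim a (b - a) 2 := by
  rw [eq_sub_of_add_eq h, discrim]
  ring

end Euler

/-- For natural numbers `f₀, f₁, f₂` with `f₂ ≥ 1` satisfying Euler's relation
`f₀ + f₂ = f₁ + 2`, every complex root of the Euler polynomial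
`p(X) = f₂·X³ + f₁·X² + f₀·X + 2 ∈ ℝ[X]` is real iff `(f₀ + 2)² ≥ 8·(f₁ + 2)`. -/
theorem euler_polynomial_all_roots_real_iff (f₀ f₁ f₂ : ℕ) (hf₂ : 1 ≤ f₂)
    (heuler : f₀ + f₂ = f₁ + 2) :
    (∀ z : ℂ,
        ((C (f₂ : ℝ) * X ^ 3 + C (f₁ : ℝ) * X ^ 2 + C (f₀ : ℝ) * X + C 2).map
            (algebraMap ℝ ℂ)).IsRoot z → z.im = 0) ↔
      (f₀ + 2) ^ 2 ≥ 8 * (f₁ + 2) := by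
  have heulerR : (f₀ : ℝ) + f₂ = f₁ + 2 := by exact_mod_cast heuler
  have hf₂R : (f₂ : ℝ) ≠ 0 := by positivity
  change AllRootsReal _ ↔ _
  rw [euler_cubic_eq_mul heulerR, allRootsReal_mul, and_iff_right (allRootsReal_X_add_C 1),
    allRootsReal_quadratic_iff hf₂R, ← euler_discrim_eq heulerR, sub_nonneg, ge_iff_le,
    ← Nat.cast_le (α := ℝ)]
  push_cast
  rfl
end

section
/- Theorem 2 (arithmetic form): For natural numbers m, n with 1 ≤ m ≤ n, the inequality (m·n + 2)² ≥ 8·(2·m·n − m − n + 2) holds if and only if it is NOT the case that (m = 1 and n ≤ 4) or (m = 2 and n ≤ 3). (Here 2mn − m − n is the number of edges of the rectangular grid graph G_{m,n} = P_m × P_n, which has mn vertices.) -/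
/-- Theorem 2, arithmetic form: For natural numbers `1 ≤ m ≤ n`, the
inequality `(mn + 2)² ≥ 8·(2mn − m − n + 2)` holds iff it is NOT the case that
(`m = 1` and `n ≤ 4`) or (`m = 2` and `n ≤ 3`).  (Here `2mn − m − n` is the number of
edges of the rectangular grid graph `G_{m,n} = P_m × P_n`, which has `mn` vertices.) -/
theorem rect_grid_real_iff_arith (m n : ℕ) (hm : 1 ≤ m) (hmn : m ≤ n) :
    (m * n + 2) ^ 2 ≥ 8 * (2 * m * n - m - n + 2) ↔
      ¬ ((m = 1 ∧ n ≤ 4) ∨ (m = 2 ∧ n ≤ 3)) := by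
  constructor
  · rintro h (⟨rfl, hn⟩ | ⟨rfl, hn⟩)
    · interval_cases n <;> norm_num at h
    · interval_cases n <;> norm_num at h
  · intro h
    rcases Nat.lt_or_ge m 3 with hm3 | hm3
    · interval_cases m
      · have hn : 5 ≤ n := by
          by_contra hc
          exact h (Or.inl ⟨rfl, by omega⟩)
        have he : 2 * 1 * n - 1 - n + 2 = n + 1 := by omega
        rw [he]
        nlinarith
      · have hn : 4 ≤ n := by
          by_contra hc
          exact h (Or.inr ⟨rfl, by omega⟩)
        have he : 2 * 2 * n - 2 - n + 2 = 3 * n := by omega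
        rw [he]
        nlinarith
    · have hmn2 : m + n ≤ 2 * m * n := by nlinarith
      have he : 2 * m * n - m - n + 2 + (m + n) = 2 * m * n + 2 := by omega
      have hn3 : 3 ≤ n := le_trans hm3 hmn
      have key : 12 * (m * n) ≤ (m * n) ^ 2 + 36 := by
        zify
        nlinarith [sq_nonneg ((m : ℤ) * n - 6)]
      nlinarith [key, he, hm3, hn3]
end

section
/- Theorem 2 (graph form): For natural numbers m, n with 1 ≤ m ≤ n, let G be the box (Cartesian) product of the path graph on m vertices with the path graph on n vertices, let f₀ = m·n be its number of vertices and f₁ its number of edges. Then (f₀ + 2)² ≥ 8·(f₁ + 2) holds if and only if it is NOT the case that (m = 1 and n ≤ 4) or (m = 2 and n ≤ 3). -/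
/-!
Summing degrees, `P_m □ P_n` has `f₁ = n(m - 1) + m(n - 1)` edges, and then
`(f₀ + 2)² - 8(f₁ + 2) = (mn - 6)² + 8(m + n - 6)`. This is nonnegative once `m + n ≥ 6`,
the finitely many grids with `m + n ≤ 5` all fail the inequality, and for `1 ≤ m ≤ n` the
excluded pairs are exactly those with `m + n ≤ 5`.
-/

open SimpleGraph Finset

theorem ncard_edgeSet_pathGraph (n : ℕ) : (pathGraph n).edgeSet.ncard = n - 1 := by
  cases n with
  | zero => simp [Set.eq_empty_of_isEmpty]
  | succ k =>
    have hrange : (pathGraph (k + 1)).edgeSet =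
        Set.range fun i : Fin k => s(i.castSucc, i.succ) := by
      ext e
      induction e using Sym2.ind with
      | _ u v =>
        simp only [mem_edgeSet, pathGraph_adj, Set.mem_range, Sym2.eq_iff, Fin.ext_iff,
          Fin.val_castSucc, Fin.val_succ]
        constructor
        · rintro (h | h)
          · exact ⟨⟨u, by omega⟩, .inl ⟨rfl, h⟩⟩
          · exact ⟨⟨v, by omega⟩, .inr ⟨rfl, h⟩⟩
        · rintro ⟨i, ⟨hu, hv⟩ | ⟨hv, hu⟩⟩ <;> omega
    have hinj : Function.Injective fun i : Fin k => s(i.castSucc, i.succ) := by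
      intro i j h
      simp only [Sym2.eq_iff, Fin.ext_iff, Fin.val_castSucc, Fin.val_succ] at h
      omega
    rw [hrange, Set.ncard_range_of_injective hinj, Nat.card_eq_fintype_card, Fintype.card_fin,
      Nat.add_sub_cancel]

theorem ncard_edgeSet_boxProd {α β : Type*} [Fintype α] [Fintype β]
    (G : SimpleGraph α) (H : SimpleGraph β) :
    (G □ H).edgeSet.ncard =
      Fintype.card β * G.edgeSet.ncard + Fintype.card α * H.edgeSet.ncard := by
  classical
  simp only [← coe_edgeFinset, Set.ncard_coe_finset]
  suffices 2 * #(G □ H).edgeFinset =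
      2 * (Fintype.card β * #G.edgeFinset + Fintype.card α * #H.edgeFinset) by
    omega
  calc
    _ = ∑ x : α × β, (G □ H).degree x := by
      convert (sum_degrees_eq_twice_card_edges (G □ H)).symm
    _ = ∑ a : α, ∑ b : β, (G.degree a + H.degree b) := by
      rw [Fintype.sum_prod_type]
      simp only [degree_boxProd]
    _ = _ := by
      simp only [sum_add_distrib, sum_const, card_univ, smul_eq_mul, ← mul_sum,
        sum_degrees_eq_twice_card_edges]
      ring

theorem grid_real_iff_six_le_add (m n : ℕ) (hm : 1 ≤ m) (hn : 1 ≤ n) :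
    8 * (n * (m - 1) + m * (n - 1) + 2) ≤ (m * n + 2) ^ 2 ↔ 6 ≤ m + n := by
  constructor
  · contrapose!
    intro h
    have : m ≤ 4 := by omega
    have : n ≤ 4 := by omega
    interval_cases m <;> interval_cases n <;> omega
  · intro h
    zify [hm, hn] at h ⊢
    rw [← sub_nonneg]
    calc
      (0 : ℤ) ≤ (m * n - 6) ^ 2 + 8 * (m + n - 6) := add_nonneg (sq_nonneg _) (by linarith)
      _ = _ := by ring

/-- Theorem 2, graph form: For `1 ≤ m ≤ n`, let `G = P_m □ P_n` be the
rectangular grid graph, with `f₀ = mn` vertices and `f₁` edges.  Then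
`(f₀ + 2)² ≥ 8·(f₁ + 2)` holds iff it is NOT the case that (`m = 1` and `n ≤ 4`) or
(`m = 2` and `n ≤ 3`). -/
theorem rect_grid_real_iff (m n : ℕ) (hm : 1 ≤ m) (hmn : m ≤ n) (f₀ f₁ : ℕ)
    (hf₀ : f₀ = m * n)
    (hf₁ : f₁ = ((SimpleGraph.pathGraph m).boxProd (SimpleGraph.pathGraph n)).edgeSet.ncard) :
    (f₀ + 2) ^ 2 ≥ 8 * (f₁ + 2) ↔ ¬ ((m = 1 ∧ n ≤ 4) ∨ (m = 2 ∧ n ≤ 3)) := by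
  have hn : 1 ≤ n := hm.trans hmn
  rw [hf₀, hf₁, ncard_edgeSet_boxProd, Fintype.card_fin, Fintype.card_fin,
    ncard_edgeSet_pathGraph, ncard_edgeSet_pathGraph, ge_iff_le,
    grid_real_iff_six_le_add m n hm hn]
  omega
end
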